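/- Let K be a field of characteristic 0, let P ∈ K[x,y] with deg_x P ≤ d_x and deg_y P = d_y ≥ 1, and let a ∈ K[x] be the leading coefficient of P with respect to y. Let α_1(x), …, α_{d_y}(x) be the roots of P (counted with multiplicity) in an algebraic closure of K(x), let c be an integer with 1 ≤ c ≤ d_y, let D = C(d_y, c) (the binomial coefficient), and let Σ_c P = Π_{i_1 < ⋯ < i_c} (y − (α_{i_1} + ⋯ + α_{i_c})) ∈ K(x)[y]. Then a^D · Σ_c P is a polynomial in K[x,y] of bidegree at most (d_x·D, D), and it vanishes at y = α_{i_1} + ⋯ + α_{i_c} for every choice of indices i_1 < ⋯ < i_c. -/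

import Mathlib

/-!
Let `a` be the leading coefficient of `P`. The coefficients of `Σ_c P` are symmetric
polynomials in the roots `α_i`. The coefficients of `P / a` lie in `K(x)`, so these do too.
The polynomial `a^D Σ_c P = ∏ (a y - Σ a α_i)` has coefficients integral over `K[x]`, because
every `a α_i` is. Since `K[x]` is integrally closed, these coefficients lie in `K[x]`.

The same argument over the valuation ring `O∞` of `K(x)` at infinity gives the degree bound.
Since `deg_x P ≤ d_x`, the polynomial `P / x^{d_x}` has coefficients in `O∞` and leading
coefficient `a / x^{d_x}`. So every coefficient of `a^D Σ_c P`, divided by `x^{d_x D}`, lies in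
`O∞`; that is, its degree is at most `d_x D`.
-/

open Polynomial

/-- `deg_x` of a bivariate polynomial in `K[x][y]` (inner variable `x`). -/
noncomputable def degX {K : Type*} [Field K] (P : Polynomial (Polynomial K)) : ℕ :=
  P.support.sup fun j => (P.coeff j).natDegree

/-- An algebraic closure of `K(x)`. -/
abbrev AlgClos (K : Type*) [Field K] : Type _ := AlgebraicClosure (RatFunc K)

/-- The canonical map `K[x] → L`, `L` an algebraic closure of `K(x)`. -/
noncomputable def ρ (K : Type*) [Field K] : Polynomial K →+* AlgClos K :=
  (algebraMap (RatFunc K) (AlgClos K)).comp (algebraMap (Polynomial K) (RatFunc K))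

open Finset

/-- The paper's `Σ_c P`, written in terms of the roots `α` of `P`. -/
noncomputable def composedSum {ι L : Type*} [Fintype ι] [CommRing L] (c : ℕ) (α : ι → L) :
    L[X] :=
  ∏ s ∈ powersetCard c univ, (X - C (∑ i ∈ s, α i))

section ComposedSum

variable {ι : Type*} [Fintype ι]

theorem composedSum_comp_equiv {κ L : Type*} [Fintype κ] [CommRing L] (c : ℕ) (α : ι → L)
    (e : κ ≃ ι) : composedSum c (α ∘ e) = composedSum c α := by
  rw [composedSum, composedSum, ← map_univ_equiv e, powersetCard_map, prod_map]
  simp [sum_map]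

theorem map_composedSum {L L' : Type*} [CommRing L] [CommRing L'] (f : L →+* L') (c : ℕ)
    (α : ι → L) : (composedSum c α).map f = composedSum c (f ∘ α) := by
  rw [composedSum, Polynomial.map_prod]
  refine prod_congr rfl fun s _ => ?_
  rw [Polynomial.map_sub, map_X, map_C, map_sum]
  rfl

theorem natDegree_composedSum {L : Type*} [CommRing L] [Nontrivial L] (c : ℕ) (α : ι → L) :
    (composedSum c α).natDegree = (Fintype.card ι).choose c := by
  rw [composedSum, natDegree_finsetProd_X_sub_C_eq_card, card_powersetCard, card_univ]

theorem isSymmetric_coeff_composedSum (R : Type*) [CommRing R] (c k : ℕ) :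
    ((composedSum c (MvPolynomial.X : ι → MvPolynomial ι R)).coeff k).IsSymmetric := by
  intro e
  have hX : ⇑(MvPolynomial.rename e : MvPolynomial ι R →ₐ[R] _).toRingHom ∘
      MvPolynomial.X = MvPolynomial.X ∘ e :=
    funext fun i => MvPolynomial.rename_X e i
  calc MvPolynomial.rename e ((composedSum c MvPolynomial.X).coeff k)
      = ((composedSum c MvPolynomial.X).map (MvPolynomial.rename e).toRingHom).coeff k :=
        (coeff_map _ _).symm
    _ = (composedSum c (MvPolynomial.X ∘ e)).coeff k := by rw [map_composedSum, hX]
    _ = (composedSum c MvPolynomial.X).coeff k := by rw [composedSum_comp_equiv]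

theorem aeval_esymm_mem_range {R L : Type*} [CommRing R] [CommRing L] [Algebra R L]
    {α : ι → L} (h : ∏ i, (X - C (α i)) ∈ lifts (algebraMap R L)) (j : ℕ) :
    MvPolynomial.aeval α (MvPolynomial.esymm ι R j) ∈ Set.range (algebraMap R L) := by
  rw [MvPolynomial.aeval_esymm_eq_multiset_esymm]
  rcases le_or_gt j (Fintype.card ι) with hj | hj
  · have hvieta : (∏ i, (X - C (α i))).coeff (Fintype.card ι - j) =
        (-1) ^ j * (univ.val.map α).esymm j := by
      have h := Multiset.prod_X_sub_C_coeff (univ.val.map α) (k := Fintype.card ι - j) (by simp)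
      rwa [Multiset.map_map, Multiset.card_map, card_val, card_univ, Nat.sub_sub_self hj] at h
    obtain ⟨r, hr⟩ := (lifts_iff_coeff_lifts _).1 h (Fintype.card ι - j)
    refine ⟨(-1) ^ j * r, ?_⟩
    rw [map_mul, hr, hvieta]
    simp [← mul_assoc, ← mul_pow]
  · rw [Multiset.esymm, Multiset.powersetCard_eq_empty _ (by simpa using hj)]
    exact ⟨0, by simp⟩

/-- The symmetric function theorem, applied to the coefficients of `composedSum c X`. -/
theorem composedSum_mem_lifts {R L : Type*} [CommRing R] [CommRing L] [Algebra R L]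
    {α : ι → L} (h : ∏ i, (X - C (α i)) ∈ lifts (algebraMap R L)) (c : ℕ) :
    composedSum c α ∈ lifts (algebraMap R L) := by
  refine (lifts_iff_coeff_lifts _).2 fun k => ?_
  obtain ⟨q, hq⟩ := MvPolynomial.esymmAlgHom_surjective (σ := ι) (n := Fintype.card ι) R
    le_rfl ⟨_, isSymmetric_coeff_composedSum R c k⟩
  choose e he using aeval_esymm_mem_range h
  have hα : ⇑(MvPolynomial.aeval α : MvPolynomial ι R →ₐ[R] L).toRingHom ∘
      MvPolynomial.X = α :=
    funext fun i => MvPolynomial.aeval_X α i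
  refine ⟨MvPolynomial.aeval (fun i : Fin _ => e (i + 1)) q, ?_⟩
  calc algebraMap R L (MvPolynomial.aeval (fun i : Fin _ => e (i + 1)) q)
      = MvPolynomial.aeval (fun i : Fin _ => MvPolynomial.aeval α
          (MvPolynomial.esymm ι R (i + 1))) q := by
        rw [← MvPolynomial.aeval_algebraMap_apply, Function.comp_def]
        simp_rw [he]
    _ = MvPolynomial.aeval α ((composedSum c MvPolynomial.X).coeff k) := by
        rw [← MvPolynomial.comp_aeval_apply, ← MvPolynomial.esymmAlgHom_apply, hq]
    _ = (composedSum c α).coeff k := by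
        conv_rhs => rw [← hα, ← map_composedSum, coeff_map]
        rfl

theorem isIntegral_coeff_C_pow_mul_composedSum {R L : Type*} [CommRing R] [CommRing L]
    [Algebra R L] {l : L} {α : ι → L} (hl : IsIntegral R l)
    (hα : ∀ i, IsIntegral R (l * α i)) (c k : ℕ) :
    IsIntegral R ((C l ^ (Fintype.card ι).choose c * composedSum c α).coeff k) := by
  have hprod : C l ^ (Fintype.card ι).choose c * composedSum c α =
      ∏ s ∈ powersetCard c univ, (C l * X - C (∑ i ∈ s, l * α i)) := by
    rw [composedSum, ← card_univ, ← card_powersetCard, ← prod_const, ← prod_mul_distrib]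
    refine prod_congr rfl fun s _ => ?_
    rw [mul_sub, ← C_mul, mul_sum]
  have hmem : C l ^ (Fintype.card ι).choose c * composedSum c α ∈
      lifts (integralClosure R L).val.toRingHom := by
    rw [hprod]
    exact prod_mem fun s _ => (mem_lifts _).2
      ⟨C ⟨l, hl⟩ * X - C ⟨∑ i ∈ s, l * α i, sum_mem fun i _ => hα i⟩, by simp⟩
  obtain ⟨y, hy⟩ := (lifts_iff_coeff_lifts _).1 hmem k
  exact hy ▸ y.2

end ComposedSum

section IntegrallyClosed

variable {R L : Type*} [CommRing R] [IsIntegrallyClosed R] [Field L] [Algebra R L]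

theorem mem_lifts_of_mem_lifts_of_isIntegral (F : Type*) [Field F] [Algebra R F]
    [IsFractionRing R F] [Algebra F L] [IsScalarTower R F L] {p : L[X]}
    (hp : p ∈ lifts (algebraMap F L)) (hint : ∀ k, IsIntegral R (p.coeff k)) :
    p ∈ lifts (algebraMap R L) := by
  rw [lifts_iff_coeff_lifts] at hp ⊢
  intro k
  obtain ⟨y, hy⟩ := hp k
  have hy' : IsIntegral R y := (isIntegral_algHom_iff (IsScalarTower.toAlgHom R F L)
    (algebraMap F L).injective).1 (hy ▸ hint k)
  obtain ⟨r, rfl⟩ := IsIntegrallyClosed.isIntegral_iff.1 hy'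
  exact ⟨r, by rw [← hy, IsScalarTower.algebraMap_apply R F L]⟩

theorem C_pow_mul_composedSum_mem_lifts (F : Type*) [Field F] [Algebra R F]
    [IsFractionRing R F] [Algebra F L] [IsScalarTower R F L] {ι : Type*} [Fintype ι]
    {p : R[X]} {a : R} (ha : a ≠ 0) {α : ι → L}
    (hroots : p.map (algebraMap R L) = C (algebraMap R L a) * ∏ i, (X - C (α i))) (c : ℕ) :
    C (algebraMap R L a) ^ (Fintype.card ι).choose c * composedSum c α ∈
      lifts (algebraMap R L) := by
  have hinj : Function.Injective (algebraMap R L) := by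
    rw [IsScalarTower.algebraMap_eq R F L]
    exact (algebraMap F L).injective.comp (IsFractionRing.injective R F)
  have hl : algebraMap R L a ≠ 0 := (map_ne_zero_iff _ hinj).2 ha
  have hlc : p.leadingCoeff = a := hinj <| by
    rw [← leadingCoeff_map_of_injective hinj, hroots, leadingCoeff_mul, leadingCoeff_C,
      leadingCoeff_prod]
    simp
  have hroot : ∀ i, p.eval₂ (algebraMap R L) (α i) = 0 := fun i => by
    rw [← eval_map, hroots, eval_mul, eval_prod, prod_eq_zero (mem_univ i) (by simp), mul_zero]
  have hintα : ∀ i, IsIntegral R (algebraMap R L a * α i) := fun i =>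
    hlc ▸ (algebraMap R L).isIntegralElem_leadingCoeff_mul p (α i) (hroot i)
  have hmonic : ∏ i, (X - C (α i)) ∈ lifts (algebraMap F L) := by
    refine (mem_lifts _).2 ⟨p.map (algebraMap R F) * C (algebraMap R F a)⁻¹, ?_⟩
    rw [Polynomial.map_mul, Polynomial.map_map, ← IsScalarTower.algebraMap_eq, hroots, map_C,
      map_inv₀, ← IsScalarTower.algebraMap_apply, mul_comm, ← mul_assoc, ← C_mul,
      inv_mul_cancel₀ hl, C_1, one_mul]
  refine mem_lifts_of_mem_lifts_of_isIntegral F ?_ fun k => ?_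
  · refine mul_mem (pow_mem ?_ _) (composedSum_mem_lifts hmonic c)
    rw [IsScalarTower.algebraMap_apply R F L]
    exact C_mem_lifts _ _
  · exact isIntegral_coeff_C_pow_mul_composedSum isIntegral_algebraMap hintα c k

end IntegrallyClosed

theorem degX_le_iff {K : Type*} [Field K] {P : K[X][X]} {N : ℕ} :
    degX P ≤ N ↔ ∀ j, (P.coeff j).natDegree ≤ N := by
  refine ⟨fun h j => ?_, fun h => Finset.sup_le fun j _ => h j⟩
  by_cases hj : j ∈ P.support
  · exact (Finset.le_sup (f := fun j => (P.coeff j).natDegree) hj).trans h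
  · simp [notMem_support_iff.1 hj]

theorem ρ_injective (K : Type*) [Field K] : Function.Injective (ρ K) :=
  (algebraMap (RatFunc K) (AlgClos K)).injective.comp (IsFractionRing.injective K[X] (RatFunc K))

section InftyValuation

variable {K : Type*} [Field K] [DecidableEq (RatFunc K)]

noncomputable abbrev inftyValuationSubring (K : Type*) [Field K] [DecidableEq (RatFunc K)] :
    ValuationSubring (RatFunc K) :=
  (RatFunc.inftyValuation K).valuationSubring

theorem div_X_pow_mem_inftyValuationSubring_iff (q : K[X]) (N : ℕ) :
    algebraMap K[X] (RatFunc K) q / RatFunc.X ^ N ∈ inftyValuationSubring K ↔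
      q.natDegree ≤ N := by
  rcases eq_or_ne q 0 with rfl | hq
  · simp
  rw [Valuation.mem_valuationSubring_iff, map_div₀, map_pow, RatFunc.inftyValuation.X,
    RatFunc.inftyValuation_apply, RatFunc.inftyValuation.polynomial K hq, ← WithZero.exp_nsmul,
    ← WithZero.exp_sub, ← WithZero.exp_zero, WithZero.exp_le_exp]
  simp

theorem exists_map_eq_map_mul_C_inv_X_pow {P : K[X][X]} {dx : ℕ} (hdx : degX P ≤ dx) :
    ∃ p : (inftyValuationSubring K)[X],
      p.map (algebraMap _ (RatFunc K)) =
        P.map (algebraMap K[X] (RatFunc K)) * C (RatFunc.X ^ dx)⁻¹ := by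
  rw [← mem_lifts, lifts_iff_coeff_lifts]
  intro j
  rw [coeff_mul_C, coeff_map, ← div_eq_mul_inv]
  exact ⟨⟨_, (div_X_pow_mem_inftyValuationSubring_iff _ _).2 (degX_le_iff.1 hdx j)⟩, rfl⟩

theorem exists_map_inftyValuationSubring_eq_C_mul_prod {ι : Type*} [Fintype ι] {P : K[X][X]}
    {dx : ℕ} (hdx : degX P ≤ dx) (hP : P ≠ 0) {α : ι → AlgClos K}
    (hroots : P.map (ρ K) = C (ρ K P.leadingCoeff) * ∏ i, (X - C (α i))) :
    ∃ (p : (inftyValuationSubring K)[X]) (a : inftyValuationSubring K), a ≠ 0 ∧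
      algebraMap _ (AlgClos K) a =
        ρ K P.leadingCoeff / algebraMap (RatFunc K) (AlgClos K) (RatFunc.X ^ dx) ∧
      p.map (algebraMap _ (AlgClos K)) =
        C (algebraMap _ (AlgClos K) a) * ∏ i, (X - C (α i)) := by
  obtain ⟨p, hp⟩ := exists_map_eq_map_mul_C_inv_X_pow hdx
  set a : inftyValuationSubring K := ⟨algebraMap K[X] (RatFunc K) P.leadingCoeff / RatFunc.X ^ dx,
    (div_X_pow_mem_inftyValuationSubring_iff _ _).2 (degX_le_iff.1 hdx _)⟩
  have ha : a ≠ 0 := fun h => by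
    have := congrArg Subtype.val h
    simp [a, hP, RatFunc.X_ne_zero] at this
  have hla : algebraMap _ (AlgClos K) a =
      ρ K P.leadingCoeff / algebraMap (RatFunc K) (AlgClos K) (RatFunc.X ^ dx) := by
    rw [IsScalarTower.algebraMap_apply _ (RatFunc K) (AlgClos K)]
    exact map_div₀ _ _ _
  refine ⟨p, a, ha, hla, ?_⟩
  have hmap : p.map (algebraMap _ (AlgClos K)) =
      (p.map (algebraMap _ (RatFunc K))).map (algebraMap (RatFunc K) (AlgClos K)) := by
    rw [Polynomial.map_map, ← IsScalarTower.algebraMap_eq]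
  rw [hmap, hp, Polynomial.map_mul, Polynomial.map_map, map_C, hla]
  change P.map (ρ K) * _ = _
  rw [hroots, map_inv₀, div_eq_mul_inv, C_mul]
  ring

theorem degX_le_of_map_eq {ι : Type*} [Fintype ι] {P A : K[X][X]} {dx : ℕ} (hdx : degX P ≤ dx)
    (hP : P ≠ 0) {α : ι → AlgClos K}
    (hroots : P.map (ρ K) = C (ρ K P.leadingCoeff) * ∏ i, (X - C (α i))) (c : ℕ)
    (hA : A.map (ρ K) = C (ρ K P.leadingCoeff) ^ (Fintype.card ι).choose c * composedSum c α) :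
    degX A ≤ dx * (Fintype.card ι).choose c := by
  set D := (Fintype.card ι).choose c
  obtain ⟨p, a, ha, hla, hroots'⟩ :=
    exists_map_inftyValuationSubring_eq_C_mul_prod hdx hP hroots
  have hlift := C_pow_mul_composedSum_mem_lifts (RatFunc K) ha hroots' c
  refine degX_le_iff.2 fun k => ?_
  obtain ⟨v, hv⟩ := (lifts_iff_coeff_lifts _).1 hlift k
  have hcoeff : (C (algebraMap _ (AlgClos K) a) ^ D * composedSum c α).coeff k =
      algebraMap (RatFunc K) (AlgClos K)
        (algebraMap K[X] (RatFunc K) (A.coeff k) / RatFunc.X ^ (dx * D)) := by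
    rw [hla, ← C_pow, div_pow, div_eq_inv_mul, C_mul, mul_assoc, C_pow, ← hA, coeff_C_mul,
      coeff_map, map_div₀, pow_mul, inv_mul_eq_div]
    simp only [map_pow]
    rfl
  rw [IsScalarTower.algebraMap_apply _ (RatFunc K) (AlgClos K)] at hv
  rw [← div_X_pow_mem_inftyValuationSubring_iff,
    ← (algebraMap (RatFunc K) (AlgClos K)).injective (hv.trans hcoeff)]
  exact v.2

end InftyValuation

theorem pure_composed_sum_general (K : Type*) [Field K]
    (P : Polynomial (Polynomial K)) (dx dy c D : ℕ)
    (hdx : degX P ≤ dx) (hdy : P.natDegree = dy) (hdy1 : 1 ≤ dy)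
    (hD : D = Nat.choose dy c)
    (α : Fin dy → AlgClos K)
    (hroots : P.map (ρ K) =
      C (ρ K P.leadingCoeff) * ∏ i : Fin dy, (X - C (α i))) :
    ∃ A : Polynomial (Polynomial K),
      degX A ≤ dx * D ∧ A.natDegree ≤ D ∧
      A.map (ρ K) = C (ρ K P.leadingCoeff) ^ D *
        ∏ s ∈ Finset.powersetCard c (Finset.univ : Finset (Fin dy)),
          (X - C (∑ i ∈ s, α i)) ∧
      ∀ s ∈ Finset.powersetCard c (Finset.univ : Finset (Fin dy)),
        (A.map (ρ K)).eval (∑ i ∈ s, α i) = 0 := by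
  classical
  have hP : P ≠ 0 := by
    rintro rfl
    rw [natDegree_zero] at hdy
    omega
  have hD' : D = (Fintype.card (Fin dy)).choose c := by rw [hD, Fintype.card_fin]
  have hρ : algebraMap K[X] (AlgClos K) = ρ K :=
    (IsScalarTower.algebraMap_eq K[X] (RatFunc K) (AlgClos K)).symm
  obtain ⟨A, hA⟩ := (mem_lifts _).1 <| C_pow_mul_composedSum_mem_lifts (RatFunc K)
    (leadingCoeff_ne_zero.2 hP) (hρ ▸ hroots) c
  rw [hρ, ← hD'] at hA
  refine ⟨A, hD' ▸ degX_le_of_map_eq hdx hP hroots c (hD' ▸ hA), ?_, hA, fun s hs => ?_⟩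
  · rw [← natDegree_map_eq_of_injective (ρ_injective K), hA, ← C_pow]
    exact (natDegree_C_mul_le _ _).trans (natDegree_composedSum c α ▸ hD'.ge)
  · rw [hA, eval_mul, composedSum, eval_prod,
      prod_eq_zero hs (by rw [eval_sub, eval_X, eval_C, sub_self]), mul_zero]

theorem pure_composed_sum (K : Type*) [Field K] [CharZero K]
    (P : Polynomial (Polynomial K)) (dx dy c D : ℕ)
    (hdx : degX P ≤ dx) (hdy : P.natDegree = dy) (hdy1 : 1 ≤ dy)
    (hc1 : 1 ≤ c) (hcd : c ≤ dy) (hD : D = Nat.choose dy c)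
    (α : Fin dy → AlgClos K)
    (hroots : P.map (ρ K) =
      C (ρ K P.leadingCoeff) * ∏ i : Fin dy, (X - C (α i))) :
    ∃ A : Polynomial (Polynomial K),
      degX A ≤ dx * D ∧ A.natDegree ≤ D ∧
      A.map (ρ K) = C (ρ K P.leadingCoeff) ^ D *
        ∏ s ∈ Finset.powersetCard c (Finset.univ : Finset (Fin dy)),
          (X - C (∑ i ∈ s, α i)) ∧
      ∀ s ∈ Finset.powersetCard c (Finset.univ : Finset (Fin dy)),
        (A.map (ρ K)).eval (∑ i ∈ s, α i) = 0 :=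
  pure_composed_sum_general K P dx dy c D hdx hdy hdy1 hD α hroots
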